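/- Suppose U(ℤ_n), U(ℤ_{φ(n)}), and U(ℤ_{φ(φ(n))}) are all cyclic. Then the set U³(ℤ_n) = {g₁^(g₂^i mod φ(n)) mod n : gcd(i, φ(φ(n))) = 1} has cardinality φ(φ(φ(n))). -/

import Mathlib

/-!
Write `M = φ(φ n)`. Since `g₁` has order `φ n`, the map `u ↦ g₁ ^ u.val` embeds `U(ℤ_{φ n})` into
`U(ℤ_n)`. The exponents `g₂ ^ i` with `gcd(i, M) = 1` are exactly the elements of order `M`, i.e. the
generators, of the cyclic group `U(ℤ_{φ n})` of order `M`, and there are `φ M` of them.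
-/

open Function Subgroup

theorem pow_zmod_val_injective {G : Type*} [Monoid G] {g : G} {m : ℕ} [NeZero m]
    (hg : orderOf g = m) : Injective fun k : ZMod m => g ^ k.val := by
  intro a b hab
  have hval_lt (k : ZMod m) : k.val ∈ Set.Iio (orderOf g) := hg ▸ ZMod.val_lt k
  exact ZMod.val_injective m (pow_injOn_Iio_orderOf (hval_lt a) (hval_lt b) hab)

theorem IsOfFinOrder.orderOf_pow_eq_orderOf_iff_coprime {G : Type*} [Monoid G] {g : G}
    (hg : IsOfFinOrder g) (i : ℕ) : orderOf (g ^ i) = orderOf g ↔ i.Coprime (orderOf g) := by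
  refine ⟨fun h => ?_, fun h => h.symm.orderOf_pow⟩
  rw [hg.orderOf_pow, Nat.div_eq_self, or_iff_right hg.orderOf_pos.ne'] at h
  exact Nat.coprime_comm.mp h

theorem setOf_orderOf_eq_image_pow_coprime {G : Type*} [Group G] [Finite G] {g : G}
    (hg : ∀ x, x ∈ zpowers g) :
    {u : G | orderOf u = orderOf g} = (g ^ ·) '' {i : ℕ | i.Coprime (orderOf g)} := by
  ext u
  constructor
  · intro hu
    obtain ⟨i, rfl⟩ := mem_powers_iff_mem_zpowers.mpr (hg u)
    exact ⟨i, ((isOfFinOrder_of_finite g).orderOf_pow_eq_orderOf_iff_coprime i).mp hu, rfl⟩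
  · rintro ⟨i, hi, rfl⟩
    exact hi.symm.orderOf_pow

theorem IsCyclic.natCard_setOf_orderOf_eq {G : Type*} [Group G] [IsCyclic G] [Finite G] {d : ℕ}
    (hd : d ∣ Nat.card G) : Nat.card {u : G | orderOf u = d} = d.totient := by
  classical
  have := Fintype.ofFinite G
  rw [Nat.card_eq_fintype_card] at hd
  rw [← IsCyclic.card_orderOf_eq_totient hd, Nat.card_eq_fintype_card, ← Set.toFinset_card,
    Set.toFinset_ofPred]

theorem ZMod.orderOf_unit_eq_totient_of_forall_mem_zpowers {m : ℕ} [NeZero m] {g : (ZMod m)ˣ}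
    (hg : ∀ x, x ∈ zpowers g) : orderOf g = m.totient := by
  rw [orderOf_eq_card_of_forall_mem_zpowers hg, Nat.card_eq_fintype_card,
    ZMod.card_units_eq_totient]

theorem U3_card_general (n : ℕ) [NeZero (Nat.totient n)]
    (g₁ : (ZMod n)ˣ) (g₂ : (ZMod (Nat.totient n))ˣ)
    (hg₁ : ∀ x, x ∈ Subgroup.zpowers g₁)
    (hg₂ : ∀ x, x ∈ Subgroup.zpowers g₂) :
    Nat.card {x : (ZMod n)ˣ | ∃ i : ℕ, Nat.gcd i (Nat.totient (Nat.totient n)) = 1 ∧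
        x = g₁ ^ ((g₂ ^ i : (ZMod (Nat.totient n))ˣ) : ZMod (Nat.totient n)).val} =
      Nat.totient (Nat.totient (Nat.totient n)) := by
  have : NeZero n := ⟨fun h => NeZero.ne (Nat.totient n) (by simp [h])⟩
  have : IsCyclic (ZMod (Nat.totient n))ˣ := ⟨g₂, hg₂⟩
  have hord₁ := ZMod.orderOf_unit_eq_totient_of_forall_mem_zpowers hg₁
  have hord₂ := ZMod.orderOf_unit_eq_totient_of_forall_mem_zpowers hg₂
  have hU3 : {x : (ZMod n)ˣ | ∃ i : ℕ, Nat.gcd i (Nat.totient (Nat.totient n)) = 1 ∧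
        x = g₁ ^ ((g₂ ^ i : (ZMod (Nat.totient n))ˣ) : ZMod (Nat.totient n)).val} =
      (fun u : (ZMod (Nat.totient n))ˣ => g₁ ^ (u : ZMod (Nat.totient n)).val) ''
        {u | orderOf u = orderOf g₂} := by
    rw [setOf_orderOf_eq_image_pow_coprime hg₂, Set.image_image, hord₂]
    ext x
    exact exists_congr fun i => and_congr_right fun _ => eq_comm
  have hinj : Injective fun u : (ZMod (Nat.totient n))ˣ => g₁ ^ (u : ZMod (Nat.totient n)).val :=
    (pow_zmod_val_injective hord₁).comp Units.val_injective
  rw [hU3, Nat.card_image_of_injective hinj,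
    IsCyclic.natCard_setOf_orderOf_eq (orderOf_dvd_natCard g₂), hord₂]

/-- If `U(ℤ_n)`, `U(ℤ_{φ n})`, `U(ℤ_{φ φ n})` are all cyclic, then
`U³(ℤ_n) = {g₁ ^ (g₂ ^ i mod φ n) : gcd(i, φ φ n) = 1}` has cardinality `φ(φ(φ n))`. -/
theorem U3_card (n : ℕ) [NeZero n] [NeZero (Nat.totient n)]
    (g₁ : (ZMod n)ˣ) (g₂ : (ZMod (Nat.totient n))ˣ)
    (hg₁ : ∀ x, x ∈ Subgroup.zpowers g₁)
    (hg₂ : ∀ x, x ∈ Subgroup.zpowers g₂)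
    (hcyc : IsCyclic (ZMod (Nat.totient (Nat.totient n)))ˣ) :
    Nat.card {x : (ZMod n)ˣ | ∃ i : ℕ, Nat.gcd i (Nat.totient (Nat.totient n)) = 1 ∧
        x = g₁ ^ ((g₂ ^ i : (ZMod (Nat.totient n))ˣ) : ZMod (Nat.totient n)).val} =
      Nat.totient (Nat.totient (Nat.totient n)) :=
  U3_card_general n g₁ g₂ hg₁ hg₂
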